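/- Let n ≥ 3 and define G : ℕ → ℕ by G(x) = mex {G(x-s) : s ∈ {2, 4n, 4n+2}, s ≤ x}. Then the set of losing (P-) positions, i.e. {x : G(x) = 0}, is exactly {8nk + 4m + t : k ∈ ℕ, 0 ≤ m ≤ n-1, t ∈ {0,1}}. -/
import Mathlib


noncomputable def mex (T : Set ℕ) : ℕ := sInf {k : ℕ | k ∉ T}

def subRec (n : ℕ) (G : ℕ → ℕ) : Prop :=
  ∀ x : ℕ, G x = mex {y : ℕ | ∃ s ∈ ({2, 4*n, 4*n+2} : Set ℕ), s ≤ x ∧ y = G (x - s)}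

def passRec (n : ℕ) (G0 G1 : ℕ → ℕ) : Prop :=
  G1 0 = 0 ∧ G1 1 = 0 ∧
  ∀ x : ℕ, 2 ≤ x →
    G1 x = mex ({y : ℕ | ∃ s ∈ ({2, 4*n, 4*n+2} : Set ℕ), s ≤ x ∧ y = G1 (x - s)} ∪ {G0 x})

def Ppos (n x : ℕ) : Prop := x % (8*n) < 4*n ∧ x % 4 < 2

lemma Ppos_iff (n : ℕ) (hn : 3 ≤ n) (k s : ℕ) (hs : s < 8*n) :
    Ppos n (8*n*k + s) ↔ (s < 4*n ∧ s % 4 < 2) := by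
  have h1 : (8*n*k + s) % (8*n) = s := by
    rw [Nat.mul_add_mod, Nat.mod_eq_of_lt hs]
  have h2 : (8*n*k + s) % 4 = s % 4 := by
    have h : 8*n*k + s = 4*(2*n*k) + s := by ring
    rw [h, Nat.mul_add_mod]
  unfold Ppos
  rw [h1, h2]

lemma key (n : ℕ) (hn : 3 ≤ n) (x : ℕ) :
    Ppos n x ↔
      ¬ ((2 ≤ x ∧ Ppos n (x - 2)) ∨ (4*n ≤ x ∧ Ppos n (x - 4*n)) ∨
         (4*n + 2 ≤ x ∧ Ppos n (x - (4*n + 2)))) := by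
  obtain ⟨k, r, hr, heq⟩ : ∃ k r, r < 8*n ∧ x = 8*n*k + r :=
    ⟨x / (8*n), x % (8*n), Nat.mod_lt _ (by omega), (Nat.div_add_mod x (8*n)).symm⟩
  rcases k with _ | k
  · have hx0 : x = r := by simpa using heq
    subst hx0
    have pm : ∀ s, Ppos n (x - s) ↔ (x - s < 4*n ∧ (x - s) % 4 < 2) := by
      intro s
      simpa using Ppos_iff n hn 0 (x - s) (by omega)
    have px : Ppos n x ↔ (x < 4*n ∧ x % 4 < 2) := by
      simpa using Ppos_iff n hn 0 x hr
    rw [px, pm 2, pm (4*n), pm (4*n+2)]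
    omega
  · have hx : x = 8*n*k + (8*n + r) := by rw [heq]; ring
    have hxge : 8*n + r ≤ x := by rw [hx]; exact Nat.le_add_left _ _
    have px : Ppos n x ↔ (r < 4*n ∧ r % 4 < 2) := by
      rw [heq]; exact Ppos_iff n hn (k+1) r hr
    have move : ∀ s t : ℕ, t < 8*n → s + t = 8*n + r →
        (Ppos n (x - s) ↔ (t < 4*n ∧ t % 4 < 2)) := by
      intro s t ht hst
      have h : x - s = 8*n*k + t := by
        rw [hx, Nat.add_sub_assoc (by omega)]
        congr 1
        omega
      rw [h]; exact Ppos_iff n hn k t ht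
    have move' : ∀ s t : ℕ, t < 8*n → s + t = r →
        (Ppos n (x - s) ↔ (t < 4*n ∧ t % 4 < 2)) := by
      intro s t ht hst
      have h : x - s = 8*n*(k+1) + t := by
        rw [heq, Nat.add_sub_assoc (by omega)]
        congr 1
        omega
      rw [h]; exact Ppos_iff n hn (k+1) t ht
    rcases Nat.lt_or_ge r 2 with h1 | h1
    · rw [px, move 2 (8*n+r-2) (by omega) (by omega),
        move (4*n) (4*n+r) (by omega) (by omega),
        move (4*n+2) (4*n+r-2) (by omega) (by omega)]
      omega
    · rcases Nat.lt_or_ge r (4*n) with h2 | h2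
      · rw [px, move' 2 (r-2) (by omega) (by omega),
          move (4*n) (4*n+r) (by omega) (by omega),
          move (4*n+2) (4*n+r-2) (by omega) (by omega)]
        omega
      · rcases Nat.lt_or_ge r (4*n+2) with h3 | h3
        · rw [px, move' 2 (r-2) (by omega) (by omega),
            move' (4*n) (r-4*n) (by omega) (by omega),
            move (4*n+2) (4*n+r-2) (by omega) (by omega)]
          omega
        · rw [px, move' 2 (r-2) (by omega) (by omega),
            move' (4*n) (r-4*n) (by omega) (by omega),
            move' (4*n+2) (r-(4*n+2)) (by omega) (by omega)]
          omega

lemma Gzero (n : ℕ) (hn : 3 ≤ n) (G : ℕ → ℕ) (hG : subRec n G) :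
    ∀ x, (G x = 0 ↔ Ppos n x) := by
  intro x
  induction x using Nat.strong_induction_on with
  | _ x ih =>
    rw [hG x]
    set T := {y : ℕ | ∃ s ∈ ({2, 4*n, 4*n+2} : Set ℕ), s ≤ x ∧ y = G (x - s)} with hT
    have hmem : ∀ y, y ∈ T ↔ ((2 ≤ x ∧ y = G (x-2)) ∨ (4*n ≤ x ∧ y = G (x - 4*n)) ∨
        (4*n+2 ≤ x ∧ y = G (x - (4*n+2)))) := by
      intro y
      constructor
      · rintro ⟨s, hs, hsx, rfl⟩
        simp only [Set.mem_insert_iff, Set.mem_singleton_iff] at hs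
        rcases hs with rfl | rfl | rfl
        · exact Or.inl ⟨hsx, rfl⟩
        · exact Or.inr (Or.inl ⟨hsx, rfl⟩)
        · exact Or.inr (Or.inr ⟨hsx, rfl⟩)
      · rintro (⟨h, rfl⟩ | ⟨h, rfl⟩ | ⟨h, rfl⟩)
        · exact ⟨2, by simp, h, rfl⟩
        · exact ⟨4*n, by simp, h, rfl⟩
        · exact ⟨4*n+2, by simp, h, rfl⟩
    have hne : ∃ m, m ∉ T := by
      refine ⟨G (x-2) + G (x - 4*n) + G (x - (4*n+2)) + 1, ?_⟩
      intro hm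
      rw [hmem] at hm
      rcases hm with ⟨_, h⟩ | ⟨_, h⟩ | ⟨_, h⟩ <;> omega
    have h0 : mex T = 0 ↔ 0 ∉ T := by
      unfold mex
      rw [Nat.sInf_eq_zero]
      constructor
      · rintro (h | h)
        · exact h
        · obtain ⟨m, hm⟩ := hne
          have : m ∈ {k | k ∉ T} := hm
          rw [h] at this
          exact absurd this (Set.notMem_empty m)
      · exact fun h => Or.inl h
    rw [h0, key n hn x]
    have h0T : 0 ∈ T ↔ ((2 ≤ x ∧ Ppos n (x-2)) ∨ (4*n ≤ x ∧ Ppos n (x - 4*n)) ∨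
        (4*n+2 ≤ x ∧ Ppos n (x - (4*n+2)))) := by
      rw [hmem 0]
      constructor
      · rintro (⟨h, h'⟩ | ⟨h, h'⟩ | ⟨h, h'⟩)
        · exact Or.inl ⟨h, (ih (x-2) (by omega)).mp h'.symm⟩
        · exact Or.inr (Or.inl ⟨h, (ih (x-4*n) (by omega)).mp h'.symm⟩)
        · exact Or.inr (Or.inr ⟨h, (ih (x-(4*n+2)) (by omega)).mp h'.symm⟩)
      · rintro (⟨h, h'⟩ | ⟨h, h'⟩ | ⟨h, h'⟩)
        · exact Or.inl ⟨h, ((ih (x-2) (by omega)).mpr h').symm⟩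
        · exact Or.inr (Or.inl ⟨h, ((ih (x-4*n) (by omega)).mpr h').symm⟩)
        · exact Or.inr (Or.inr ⟨h, ((ih (x-(4*n+2)) (by omega)).mpr h').symm⟩)
    rw [not_iff_not.mpr h0T]

theorem stmt (n : ℕ) (hn : 3 ≤ n) (G : ℕ → ℕ) (hG : subRec n G) :
    {x : ℕ | G x = 0} = {x : ℕ | ∃ k m t : ℕ, m ≤ n - 1 ∧ (t = 0 ∨ t = 1) ∧ x = 8*n*k + 4*m + t} := by
  ext x
  simp only [Set.mem_setOf_eq]
  rw [Gzero n hn G hG x]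
  constructor
  · intro h
    obtain ⟨k, r, hr, heq⟩ : ∃ k r, r < 8*n ∧ x = 8*n*k + r :=
      ⟨x / (8*n), x % (8*n), Nat.mod_lt _ (by omega), (Nat.div_add_mod x (8*n)).symm⟩
    rw [heq, Ppos_iff n hn k r hr] at h
    refine ⟨k, r / 4, r % 4, by omega, by omega, ?_⟩
    rw [heq, Nat.add_assoc]
    congr 1
    omega
  · rintro ⟨k, m, t, hm, ht, rfl⟩
    have h : 8*n*k + 4*m + t = 8*n*k + (4*m + t) := by ring
    rw [h, Ppos_iff n hn k (4*m+t) (by omega)]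
    omega
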